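/- The function ρ₁(z) = ((θ₁(0)-θ₁(u₀))e^{(θ₁(u₀)+θ₂(0))z} - (θ₁(0)+θ₂(u₀))e^{(θ₂(0)-θ₂(u₀))z}) / (e^{θ₁(u₀)z} - e^{-θ₂(u₀)z}) is strictly increasing on (0,∞). -/

import Mathlib

open Real Set

noncomputable def th1 (μ σ r u : ℝ) : ℝ := (Real.sqrt ((μ - u)^2 + 2*r*σ^2) + (μ - u)) / σ^2
noncomputable def th2 (μ σ r u : ℝ) : ℝ := (Real.sqrt ((μ - u)^2 + 2*r*σ^2) - (μ - u)) / σ^2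

noncomputable def rho1 (μ σ r u₀ z : ℝ) : ℝ :=
  ((th1 μ σ r 0 - th1 μ σ r u₀) * Real.exp ((th1 μ σ r u₀ + th2 μ σ r 0) * z)
    - (th1 μ σ r 0 + th2 μ σ r u₀) * Real.exp ((th2 μ σ r 0 - th2 μ σ r u₀) * z)) /
  (Real.exp (th1 μ σ r u₀ * z) - Real.exp (-(th2 μ σ r u₀) * z))

noncomputable def rho2 (μ σ r u₀ z : ℝ) : ℝ :=
  ((th2 μ σ r 0 - th2 μ σ r u₀) * Real.exp (-(th1 μ σ r 0 + th2 μ σ r u₀) * z)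
    - (th2 μ σ r 0 + th1 μ σ r u₀) * Real.exp ((th1 μ σ r u₀ - th1 μ σ r 0) * z)) /
  (Real.exp (th1 μ σ r u₀ * z) - Real.exp (-(th2 μ σ r u₀) * z))

/-!
Write `a = θ₁(0)`, `b = θ₂(0)`, `c = θ₁(u₀)`, `d = θ₂(u₀)`.
Splitting off `(a - c) e^{bz}` gives `ρ₁(z) = (a - c) e^{bz} - (c + d) / (e^{(c+d-b)z} - e^{-bz})`.
Both `θ`s are positive, `θ₁` decreases and `θ₂` increases in `u`, so `a > c`, `b > 0` and
`c + d > b`: the first term is nondecreasing, and the last denominator is positive and strictly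
increasing on `(0, ∞)`.
-/

lemma abs_lt_sqrt_sq_add {K : ℝ} (hK : 0 < K) (m : ℝ) : |m| < √(m ^ 2 + K) :=
  (Real.lt_sqrt (abs_nonneg m)).2 (by rw [sq_abs]; linarith)

lemma sqrt_sq_add_add_pos {K : ℝ} (hK : 0 < K) (m : ℝ) : 0 < √(m ^ 2 + K) + m := by
  linarith [abs_lt_sqrt_sq_add hK m, neg_abs_le m]

lemma strictMono_sqrt_sq_add_add {K : ℝ} (hK : 0 < K) :
    StrictMono fun m : ℝ => √(m ^ 2 + K) + m := by
  intro m₁ m₂ hm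
  have hs₁ := Real.sq_sqrt (by positivity : 0 ≤ m₁ ^ 2 + K)
  have hs₂ := Real.sq_sqrt (by positivity : 0 ≤ m₂ ^ 2 + K)
  have h₁ := sqrt_sq_add_add_pos hK m₁
  have h₂ := sqrt_sq_add_add_pos hK (-m₂)
  rw [neg_sq] at h₂
  -- `s₁ - s₂ = (m₁ - m₂)(m₁ + m₂) / (s₁ + s₂)` with `sᵢ = √(mᵢ² + K) > |mᵢ|`
  nlinarith [mul_pos (sub_pos.2 hm) (add_pos h₁ h₂)]

section Theta

variable {μ σ r : ℝ}

lemma th1_pos (hσ : σ ≠ 0) (hr : 0 < r) (u : ℝ) : 0 < th1 μ σ r u :=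
  div_pos (sqrt_sq_add_add_pos (by positivity) _) (by positivity)

lemma th1_strictAnti (hσ : σ ≠ 0) (hr : 0 < r) : StrictAnti (th1 μ σ r) := fun _ _ hu =>
  div_lt_div_of_pos_right (strictMono_sqrt_sq_add_add (by positivity) (by linarith))
    (by positivity)

lemma th2_eq_th1_neg (μ σ r u : ℝ) : th2 μ σ r u = th1 (-μ) σ r (-u) := by
  unfold th1 th2
  ring_nf

lemma th2_pos (hσ : σ ≠ 0) (hr : 0 < r) (u : ℝ) : 0 < th2 μ σ r u := by
  rw [th2_eq_th1_neg]
  exact th1_pos hσ hr _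

lemma th2_strictMono (hσ : σ ≠ 0) (hr : 0 < r) : StrictMono (th2 μ σ r) := fun u v huv => by
  simp only [th2_eq_th1_neg]
  exact th1_strictAnti hσ hr (neg_lt_neg huv)

end Theta

section ExpRatio

variable {a b c d z : ℝ}

lemma exp_ratio_eq (hden : exp (c * z) ≠ exp (-d * z)) :
    ((a - c) * exp ((c + b) * z) - (a + d) * exp ((b - d) * z)) / (exp (c * z) - exp (-d * z))
      = (a - c) * exp (b * z) - (c + d) / (exp ((c + d - b) * z) - exp (-(b * z))) := by
  have hD : exp ((c + d - b) * z) - exp (-(b * z))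
      = (exp (c * z) - exp (-d * z)) * exp ((d - b) * z) := by
    rw [sub_mul (exp _), ← exp_add, ← exp_add]
    ring_nf
  rw [hD, ← div_div, div_eq_mul_inv _ (exp _), ← exp_neg, eq_sub_iff_add_eq, div_mul_eq_mul_div,
    ← add_div, div_eq_iff (sub_ne_zero.2 hden), mul_sub, mul_assoc, mul_assoc, ← exp_add,
    ← exp_add]
  ring_nf

lemma strictMonoOn_exp_ratio (hac : c ≤ a) (hb : 0 < b) (hbcd : b ≤ c + d) :
    StrictMonoOn (fun z => ((a - c) * exp ((c + b) * z) - (a + d) * exp ((b - d) * z))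
      / (exp (c * z) - exp (-d * z))) (Ioi 0) := by
  have hcd : 0 < c + d := hb.trans_le hbcd
  intro x (hx : 0 < x) y (hy : 0 < y) hxy
  have hden {z : ℝ} (hz : 0 < z) : exp (c * z) ≠ exp (-d * z) :=
    (exp_lt_exp.2 (by nlinarith)).ne'
  simp only [exp_ratio_eq (hden hx), exp_ratio_eq (hden hy)]
  have hgrowth : (a - c) * exp (b * x) ≤ (a - c) * exp (b * y) :=
    mul_le_mul_of_nonneg_left (exp_le_exp.2 (by nlinarith)) (sub_nonneg.2 hac)
  have hDx : 0 < exp ((c + d - b) * x) - exp (-(b * x)) := sub_pos.2 (exp_lt_exp.2 (by nlinarith))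
  have hDxy : exp ((c + d - b) * x) - exp (-(b * x)) < exp ((c + d - b) * y) - exp (-(b * y)) := by
    have h₁ : exp ((c + d - b) * x) ≤ exp ((c + d - b) * y) :=
      exp_le_exp.2 (mul_le_mul_of_nonneg_left hxy.le (sub_nonneg.2 hbcd))
    have h₂ : exp (-(b * y)) < exp (-(b * x)) :=
      exp_lt_exp.2 (neg_lt_neg (mul_lt_mul_of_pos_left hxy hb))
    linarith
  linarith [div_lt_div_of_pos_left hcd hDx hDxy]

end ExpRatio

theorem stmt13 (μ σ r u₀ : ℝ) (hσ : 0 < σ) (hr : 0 < r) (hu₀ : 0 < u₀) :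
    StrictMonoOn (rho1 μ σ r u₀) (Set.Ioi 0) :=
  strictMonoOn_exp_ratio (th1_strictAnti hσ.ne' hr hu₀).le (th2_pos hσ.ne' hr 0)
    (by linarith [th1_pos hσ.ne' hr (μ := μ) u₀, th2_strictMono (μ := μ) hσ.ne' hr hu₀])
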